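/- arXiv:0910.2896 — 3 statements merged into one kernel-verified Lean document; each statement's English description precedes it below -/
import Mathlib

section
/- In dimension d ≤ 3, there exists C > 0 (depending only on d) such that for all ε ∈ (0,1) and all integers L with Lε ≥ 1, every u ∈ ℓ²(ℤ^d/(2L+1)ℤ^d) with ‖u‖₂ = 1 and ⟨-Δ_L^P u, u⟩ ≤ ε² satisfies ‖u‖₄ ≤ C ε^{d/4}. -/
/-!
The argument stays in physical space with `g = ‖u‖²`. On a cycle of length `n`, `g` is at most
its mean plus its total variation, and by Cauchy–Schwarz the total variation of `‖u‖²` in a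
direction `v` is at most `2 ‖u(· + v) - u‖₂ ‖u‖₂ ≤ 2ε`; with `1/n ≤ ε` this gives `‖u‖∞² ≤ 3ε`,
hence the case `d = 1`. For `d = 2`, bounding `g(x, y)²` by the product of the maxima of `g` on
the row and on the column through `(x, y)` gives `‖u‖₄⁴ ≤ (∑_y max_x g)(∑_x max_y g) ≤ (3ε)²`
(a discrete Ladyzhenskaya inequality). For `d = 3` the two-dimensional bound is applied on every
slice `z = const`, whose mass is at most `3ε` by the one-dimensional argument applied to the
slice masses.
-/

open Finset

/-- The discrete torus `ℤ^d/(2L+1)ℤ^d`, i.e. the cube `Λ_L = [-L,L]^d ∩ ℤ^d`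
with periodic identification. -/
abbrev DTorus (d L : ℕ) := Fin d → ZMod (2 * L + 1)

/-- The discrete Laplacian `-Δ` with periodic boundary conditions:
`(-Δu)(β) = Σ_{j} (2u(β) - u(β+e_j) - u(β-e_j))`. -/
noncomputable def dLap (d L : ℕ) (u : DTorus d L → ℂ) (β : DTorus d L) : ℂ :=
  ∑ j : Fin d,
    (2 * u β - u (β + fun i => if i = j then 1 else 0)
      - u (β - fun i => if i = j then 1 else 0))

/-- The discrete Dirichlet energy `⟨-Δ_L^P u, u⟩`. -/
noncomputable def dEnergy (d L : ℕ) (u : DTorus d L → ℂ) : ℝ :=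
  (∑ β : DTorus d L, (starRingEnd ℂ) (u β) * dLap d L u β).re

/-- The discrete Fourier transform
`û(γ) = (2L+1)^{-d/2} Σ_β u(β) e^{-2πi γ·β/(2L+1)}`. -/
noncomputable def dft (d L : ℕ) (u : DTorus d L → ℂ) (γ : DTorus d L) : ℂ :=
  (((2 * L + 1 : ℝ) ^ (-(d : ℝ) / 2) : ℝ) : ℂ) *
    ∑ β : DTorus d L, u β *
      Complex.exp (-2 * Real.pi * Complex.I *
        ((∑ j : Fin d, (γ j).val * (β j).val : ℕ) : ℂ) / ((2 * L + 1 : ℕ) : ℂ))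

/-- The symbol of the discrete Laplacian:
`h(γ) = 2d - 2 Σ_j cos(2πγ_j/(2L+1))`. -/
noncomputable def dSymb (d L : ℕ) (γ : DTorus d L) : ℝ :=
  2 * d - 2 * ∑ j : Fin d, Real.cos (2 * Real.pi * (γ j).val / (2 * L + 1))

/-- The absolute value `|x|` of `x ∈ ℤ/(2L+1)ℤ` for the representative in `[-L, L]`. -/
def dAbs (L : ℕ) (x : ZMod (2 * L + 1)) : ℕ := min x.val (2 * L + 1 - x.val)

open ComplexConjugate

section ShiftEnergy

variable {G : Type*} [AddCommGroup G] [Fintype G]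

noncomputable def shiftEnergy (u : G → ℂ) (v : G) : ℝ := ∑ x, ‖u (x + v) - u x‖ ^ 2

lemma shiftEnergy_nonneg (u : G → ℂ) (v : G) : 0 ≤ shiftEnergy u v :=
  Finset.sum_nonneg fun _ _ => sq_nonneg _

def variation (g : G → ℝ) (v : G) : ℝ := ∑ x, |g (x + v) - g x|

lemma sum_comp_add_right {M : Type*} [AddCommMonoid M] (f : G → M) (v : G) :
    ∑ x, f (x + v) = ∑ x, f x :=
  Fintype.sum_equiv (Equiv.addRight v) _ _ fun _ => rfl

lemma sum_conj_mul_two_sub_sub (u : G → ℂ) (v : G) :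
    ∑ x, conj (u x) * (2 * u x - u (x + v) - u (x - v)) = shiftEnergy u v := by
  have hback : ∑ x, conj (u x) * u (x - v) = ∑ x, conj (u (x + v)) * u x := by
    simpa using (sum_comp_add_right (fun x => conj (u x) * u (x - v)) v).symm
  have hmass : ∑ x, conj (u (x + v)) * u (x + v) = ∑ x, conj (u x) * u x :=
    sum_comp_add_right (fun x => conj (u x) * u x) v
  have hterm : ∀ x, ((‖u (x + v) - u x‖ ^ 2 : ℝ) : ℂ)
      = conj (u (x + v) - u x) * (u (x + v) - u x) := fun x => by
    rw [← Complex.normSq_eq_norm_sq, Complex.normSq_eq_conj_mul_self]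
  simp only [shiftEnergy, Complex.ofReal_sum, hterm, map_sub, sub_mul, mul_sub,
    Finset.sum_sub_distrib, hback, hmass]
  simp only [mul_left_comm _ (2 : ℂ), ← Finset.mul_sum]
  ring

lemma variation_norm_sq_le (u : G → ℂ) (v : G) :
    variation (fun x => ‖u x‖ ^ 2) v ≤ 2 * √(shiftEnergy u v) * √(∑ x, ‖u x‖ ^ 2) := by
  have hpoint : ∀ x, |‖u (x + v)‖ ^ 2 - ‖u x‖ ^ 2|
      ≤ ‖u (x + v) - u x‖ * (‖u (x + v)‖ + ‖u x‖) := fun x => by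
    rw [sq_sub_sq, mul_comm, abs_mul, abs_of_nonneg (by positivity : 0 ≤ ‖u (x + v)‖ + ‖u x‖)]
    gcongr
    exact abs_norm_sub_norm_le _ _
  have hsum : ∑ x, (‖u (x + v)‖ + ‖u x‖) ^ 2 ≤ 4 * ∑ x, ‖u x‖ ^ 2 := by
    calc ∑ x, (‖u (x + v)‖ + ‖u x‖) ^ 2 ≤ ∑ x, 2 * (‖u (x + v)‖ ^ 2 + ‖u x‖ ^ 2) :=
          Finset.sum_le_sum fun x _ => add_sq_le
      _ = 4 * ∑ x, ‖u x‖ ^ 2 := by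
          rw [← Finset.mul_sum, Finset.sum_add_distrib,
            sum_comp_add_right (fun x => ‖u x‖ ^ 2) v]
          ring
  calc variation (fun x => ‖u x‖ ^ 2) v
      ≤ ∑ x, ‖u (x + v) - u x‖ * (‖u (x + v)‖ + ‖u x‖) := Finset.sum_le_sum fun x _ => hpoint x
    _ ≤ √(shiftEnergy u v) * √(∑ x, (‖u (x + v)‖ + ‖u x‖) ^ 2) :=
        Real.sum_mul_le_sqrt_mul_sqrt _ _ _
    _ ≤ √(shiftEnergy u v) * √(4 * ∑ x, ‖u x‖ ^ 2) := by gcongr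
    _ = 2 * √(shiftEnergy u v) * √(∑ x, ‖u x‖ ^ 2) := by
        rw [Real.sqrt_mul (by norm_num), show √(4 : ℝ) = 2 by
          rw [show (4 : ℝ) = 2 ^ 2 by norm_num, Real.sqrt_sq (by norm_num)]]
        ring

lemma shiftEnergy_comp_addEquiv_symm {H : Type*} [AddCommGroup H] [Fintype H] (e : G ≃+ H)
    (u : G → ℂ) (v : G) : shiftEnergy (u ∘ e.symm) (e v) = shiftEnergy u v := by
  simp only [shiftEnergy, Function.comp_apply]
  rw [← Equiv.sum_comp e.toEquiv]
  simp

lemma sum_norm_pow_comp_addEquiv_symm {H : Type*} [AddCommGroup H] [Fintype H] (e : G ≃+ H)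
    (u : G → ℂ) (k : ℕ) : ∑ h, ‖(u ∘ e.symm) h‖ ^ k = ∑ x, ‖u x‖ ^ k :=
  e.symm.toEquiv.sum_comp fun x => ‖u x‖ ^ k

end ShiftEnergy

section Slices

variable {G P : Type*} [AddCommGroup G] [Fintype G] [AddCommGroup P] [Fintype P]

lemma variation_pair_zero (g : G × P → ℝ) (v : G) :
    variation g (v, 0) = ∑ p, variation (fun z => g (z, p)) v := by
  simp [variation, Fintype.sum_prod_type_right]

lemma variation_zero_pair (g : G × P → ℝ) (w : P) :
    variation g (0, w) = ∑ z, variation (fun p => g (z, p)) w := by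
  simp [variation, Fintype.sum_prod_type]

lemma shiftEnergy_zero_pair (f : G × P → ℂ) (w : P) :
    shiftEnergy f (0, w) = ∑ z, shiftEnergy (fun p => f (z, p)) w := by
  simp [shiftEnergy, Fintype.sum_prod_type]

lemma variation_sum_le (g : G × P → ℝ) (v : G) :
    variation (fun z => ∑ p, g (z, p)) v ≤ variation g (v, 0) := by
  rw [variation_pair_zero]
  simp only [variation]
  rw [Finset.sum_comm]
  refine Finset.sum_le_sum fun z _ => ?_
  rw [← Finset.sum_sub_distrib]
  exact Finset.abs_sum_le_sum_abs _ _

end Slices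

section Agmon

variable {n : ℕ} [NeZero n]

lemma sub_le_variation_one (g : ZMod n → ℝ) (x y : ZMod n) : g x - g y ≤ variation g 1 := by
  set k := (x - y).val
  have hx : y + (k : ZMod n) = x := by simp [k]
  have htel : g x - g y = ∑ t ∈ range k, (g (y + t + 1) - g (y + t)) := by
    rw [← hx]
    simpa [← add_assoc] using (Finset.sum_range_sub (fun t : ℕ => g (y + t)) k).symm
  have hinj : Set.InjOn (fun t : ℕ => y + (t : ZMod n)) (range n) := by
    intro a ha b hb hab
    simpa [ZMod.val_cast_of_lt (mem_range.mp ha), ZMod.val_cast_of_lt (mem_range.mp hb)]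
      using congrArg ZMod.val (add_left_cancel hab)
  calc g x - g y = ∑ t ∈ range k, (g (y + t + 1) - g (y + t)) := htel
    _ ≤ ∑ t ∈ range n, |g (y + t + 1) - g (y + t)| :=
        (Finset.sum_le_sum fun t _ => le_abs_self _).trans <|
          Finset.sum_le_sum_of_subset_of_nonneg (range_subset_range.mpr (ZMod.val_lt _).le)
            fun _ _ _ => abs_nonneg _
    _ = ∑ z ∈ (range n).image (fun t : ℕ => y + (t : ZMod n)), |g (z + 1) - g z| :=
        (Finset.sum_image (f := fun z => |g (z + 1) - g z|) hinj).symm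
    _ ≤ variation g 1 :=
        Finset.sum_le_univ_sum_of_nonneg fun _ => abs_nonneg _

lemma le_mean_add_variation_one (g : ZMod n → ℝ) (x : ZMod n) :
    g x ≤ (∑ y, g y) / n + variation g 1 := by
  have hn : (0 : ℝ) < n := by exact_mod_cast NeZero.pos n
  rw [div_add' _ _ _ hn.ne', le_div_iff₀ hn]
  calc g x * n = ∑ _y : ZMod n, g x := by simp [mul_comm]
    _ ≤ ∑ y, (g y + variation g 1) :=
        Finset.sum_le_sum fun y _ => by linarith [sub_le_variation_one g x y]
    _ = ∑ y, g y + variation g 1 * n := by simp [Finset.sum_add_distrib, mul_comm]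

end Agmon

lemma sum_sq_le_sum_mul_sum {X Y : Type*} [Fintype X] [Fintype Y] {g : X × Y → ℝ}
    {a : Y → ℝ} {b : X → ℝ} (hg : ∀ p, 0 ≤ g p) (ha : ∀ x y, g (x, y) ≤ a y)
    (hb : ∀ x y, g (x, y) ≤ b x) : ∑ p, g p ^ 2 ≤ (∑ y, a y) * ∑ x, b x := by
  rw [mul_comm, Finset.sum_mul_sum, Fintype.sum_prod_type]
  refine Finset.sum_le_sum fun x _ => Finset.sum_le_sum fun y _ => ?_
  rw [sq, mul_comm (b x)]
  exact mul_le_mul (ha x y) (hb x y) (hg _) ((hg _).trans (ha x y))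

lemma sum_norm_pow_four_le_prod {m n : ℕ} [NeZero m] [NeZero n] (f : ZMod m × ZMod n → ℂ) :
    ∑ p, ‖f p‖ ^ 4 ≤
      ((∑ p, ‖f p‖ ^ 2) / m + 2 * √(shiftEnergy f (1, 0)) * √(∑ p, ‖f p‖ ^ 2)) *
        ((∑ p, ‖f p‖ ^ 2) / n + 2 * √(shiftEnergy f (0, 1)) * √(∑ p, ‖f p‖ ^ 2)) := by
  set g : ZMod m × ZMod n → ℝ := fun p => ‖f p‖ ^ 2
  have hg4 : ∑ p, ‖f p‖ ^ 4 = ∑ p, g p ^ 2 := by simp only [g, ← pow_mul]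
  have hsum := sum_sq_le_sum_mul_sum (g := g) (fun p => by positivity)
    (fun x y => le_mean_add_variation_one (fun x => g (x, y)) x)
    (fun x y => le_mean_add_variation_one (fun y => g (x, y)) y)
  rw [hg4]
  refine hsum.trans (mul_le_mul ?_ ?_ ?_ ?_)
  · rw [Finset.sum_add_distrib, ← Finset.sum_div, ← variation_pair_zero,
      ← Fintype.sum_prod_type_right]
    gcongr
    exact variation_norm_sq_le f (1, 0)
  · rw [Finset.sum_add_distrib, ← Finset.sum_div, ← variation_zero_pair,
      ← Fintype.sum_prod_type]
    gcongr
    exact variation_norm_sq_le f (0, 1)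
  · exact Finset.sum_nonneg fun x _ =>
      (by positivity : 0 ≤ g (x, 0)).trans (le_mean_add_variation_one (fun y => g (x, y)) 0)
  · positivity

section ZModProducts

variable {n : ℕ} [NeZero n] {ε : ℝ}

lemma sum_norm_pow_four_le_zmod (hε : 0 ≤ ε) (hn : (n : ℝ)⁻¹ ≤ ε) (f : ZMod n → ℂ)
    (hS : ∑ x, ‖f x‖ ^ 2 = 1) (hE : shiftEnergy f 1 ≤ ε ^ 2) :
    ∑ x, ‖f x‖ ^ 4 ≤ 3 * ε := by
  have hE' : √(shiftEnergy f 1) ≤ ε := Real.sqrt_le_iff.mpr ⟨hε, hE⟩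
  have hmax : ∀ x, ‖f x‖ ^ 2 ≤ 3 * ε := fun x => by
    have h := (le_mean_add_variation_one (fun x => ‖f x‖ ^ 2) x).trans
      (add_le_add le_rfl (variation_norm_sq_le f 1))
    rw [hS, Real.sqrt_one, one_div] at h
    linarith
  calc ∑ x, ‖f x‖ ^ 4 = ∑ x, ‖f x‖ ^ 2 * ‖f x‖ ^ 2 := by simp only [← pow_add]
    _ ≤ ∑ x, 3 * ε * ‖f x‖ ^ 2 :=
        Finset.sum_le_sum fun x _ => mul_le_mul_of_nonneg_right (hmax x) (by positivity)
    _ = 3 * ε := by rw [← Finset.mul_sum, hS, mul_one]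

lemma sum_norm_pow_four_le_zmod_prod (hε : 0 ≤ ε) (hn : (n : ℝ)⁻¹ ≤ ε)
    (f : ZMod n × ZMod n → ℂ) (hS : ∑ p, ‖f p‖ ^ 2 = 1)
    (hE : shiftEnergy f (1, 0) + shiftEnergy f (0, 1) ≤ ε ^ 2) :
    ∑ p, ‖f p‖ ^ 4 ≤ 9 * ε ^ 2 := by
  have hE₁ : √(shiftEnergy f (1, 0)) ≤ ε :=
    Real.sqrt_le_iff.mpr ⟨hε, by linarith [shiftEnergy_nonneg f (0, 1)]⟩
  have hE₂ : √(shiftEnergy f (0, 1)) ≤ ε :=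
    Real.sqrt_le_iff.mpr ⟨hε, by linarith [shiftEnergy_nonneg f (1, 0)]⟩
  have h := sum_norm_pow_four_le_prod f
  rw [hS, Real.sqrt_one, one_div] at h
  refine h.trans ?_
  calc _ ≤ (3 * ε) * (3 * ε) := by gcongr <;> linarith
    _ = 9 * ε ^ 2 := by ring

lemma sum_norm_pow_four_le_zmod_prod_prod (hε : 0 ≤ ε) (hn : (n : ℝ)⁻¹ ≤ ε)
    (f : ZMod n × ZMod n × ZMod n → ℂ) (hS : ∑ q, ‖f q‖ ^ 2 = 1)
    (hE : shiftEnergy f (1, 0, 0) + shiftEnergy f (0, 1, 0) + shiftEnergy f (0, 0, 1) ≤ ε ^ 2) :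
    ∑ q, ‖f q‖ ^ 4 ≤ 18 * ε ^ 3 := by
  set s : ZMod n → ℝ := fun z => ∑ p, ‖f (z, p)‖ ^ 2
  set e₁ : ZMod n → ℝ := fun z => shiftEnergy (fun p => f (z, p)) (1, 0)
  set e₂ : ZMod n → ℝ := fun z => shiftEnergy (fun p => f (z, p)) (0, 1)
  have hs_sum : ∑ z, s z = 1 := by rw [← hS, Fintype.sum_prod_type]
  have hs_le : ∀ z, s z ≤ 3 * ε := fun z => by
    have hE₀ : √(shiftEnergy f (1, 0, 0)) ≤ ε := Real.sqrt_le_iff.mpr ⟨hε, by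
      linarith [shiftEnergy_nonneg f (0, 1, 0), shiftEnergy_nonneg f (0, 0, 1)]⟩
    have hvar :=
      (variation_sum_le (fun q => ‖f q‖ ^ 2) 1).trans (variation_norm_sq_le f (1, 0, 0))
    have h := le_mean_add_variation_one s z
    rw [hS, Real.sqrt_one] at hvar
    rw [hs_sum, one_div] at h
    linarith
  have hslice : ∀ z, ∑ p, ‖f (z, p)‖ ^ 4 ≤ 6 * ε ^ 3 * s z + 12 * ε * (e₁ z + e₂ z) := by
    intro z
    have h := sum_norm_pow_four_le_prod fun p => f (z, p)
    have ha : s z / n ≤ ε * s z := by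
      rw [div_eq_inv_mul]; exact mul_le_mul_of_nonneg_right hn (by positivity)
    have hs0 : 0 ≤ s z := by positivity
    have he₁ : √(e₁ z) ^ 2 = e₁ z := Real.sq_sqrt (shiftEnergy_nonneg _ _)
    have he₂ : √(e₂ z) ^ 2 = e₂ z := Real.sq_sqrt (shiftEnergy_nonneg _ _)
    have hs := Real.sq_sqrt hs0
    refine h.trans ?_
    set a := s z / n
    set b := 2 * √(e₁ z) * √(s z)
    set c := 2 * √(e₂ z) * √(s z)
    calc (a + b) * (a + c) ≤ 2 * a ^ 2 + b ^ 2 + c ^ 2 := by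
          nlinarith [sq_nonneg (a - b), sq_nonneg (a - c), sq_nonneg (b - c)]
      _ = 2 * a ^ 2 + 4 * (e₁ z + e₂ z) * s z := by
          simp only [b, c, mul_pow, he₁, he₂, hs]; ring
      _ ≤ 2 * (ε * s z) ^ 2 + 4 * (e₁ z + e₂ z) * (3 * ε) := by
          have : 0 ≤ e₁ z + e₂ z := add_nonneg (shiftEnergy_nonneg _ _) (shiftEnergy_nonneg _ _)
          gcongr
          exact hs_le z
      _ ≤ 6 * ε ^ 3 * s z + 12 * ε * (e₁ z + e₂ z) := by
          nlinarith [hs_le z, mul_nonneg (mul_nonneg hε hε) hs0]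
  calc ∑ q, ‖f q‖ ^ 4 = ∑ z, ∑ p, ‖f (z, p)‖ ^ 4 := Fintype.sum_prod_type _
    _ ≤ ∑ z, (6 * ε ^ 3 * s z + 12 * ε * (e₁ z + e₂ z)) := Finset.sum_le_sum fun z _ => hslice z
    _ = 6 * ε ^ 3 + 12 * ε * (shiftEnergy f (0, 1, 0) + shiftEnergy f (0, 0, 1)) := by
        rw [Finset.sum_add_distrib, ← Finset.mul_sum, ← Finset.mul_sum, hs_sum,
          Finset.sum_add_distrib, shiftEnergy_zero_pair, shiftEnergy_zero_pair, mul_one]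
    _ ≤ 18 * ε ^ 3 := by
        nlinarith [shiftEnergy_nonneg f (1, 0, 0)]

end ZModProducts

lemma dEnergy_eq_sum_shiftEnergy (d L : ℕ) (u : DTorus d L → ℂ) :
    dEnergy d L u = ∑ j, shiftEnergy u (Pi.single j 1) := by
  have hsingle : ∀ j : Fin d, (fun i => if i = j then 1 else 0) = (Pi.single j 1 : DTorus d L) :=
    fun j => funext fun i => by simp [Pi.single_apply]
  simp only [dEnergy, dLap, hsingle, Finset.mul_sum]
  rw [Finset.sum_comm]
  simp only [sum_conj_mul_two_sub_sub, ← Complex.ofReal_sum, Complex.ofReal_re]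

lemma dEnergy_eq_sum_shiftEnergy_comp_symm {d L : ℕ} {H : Type*} [AddCommGroup H]
    [Fintype H] (e : DTorus d L ≃+ H) (u : DTorus d L → ℂ) :
    dEnergy d L u = ∑ j, shiftEnergy (u ∘ e.symm) (e (Pi.single j 1)) := by
  simp only [dEnergy_eq_sum_shiftEnergy, shiftEnergy_comp_addEquiv_symm]

lemma sum_norm_pow_four_le_of_dEnergy_le {d L : ℕ} {ε : ℝ} (hd1 : 1 ≤ d) (hd3 : d ≤ 3)
    (hε : 0 ≤ ε) (hn : ((2 * L + 1 : ℕ) : ℝ)⁻¹ ≤ ε) (u : DTorus d L → ℂ)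
    (hS : ∑ β, ‖u β‖ ^ 2 = 1) (hE : dEnergy d L u ≤ ε ^ 2) :
    ∑ β, ‖u β‖ ^ 4 ≤ 18 * ε ^ d := by
  interval_cases d
  · let e := (LinearEquiv.funUnique (Fin 1) ℤ (ZMod (2 * L + 1))).toAddEquiv
    rw [dEnergy_eq_sum_shiftEnergy_comp_symm e, Fin.sum_univ_one] at hE
    rw [← sum_norm_pow_comp_addEquiv_symm e] at hS ⊢
    have := sum_norm_pow_four_le_zmod hε hn _ hS (by simpa [e] using hE)
    linarith
  · let e := (LinearEquiv.finTwoArrow ℤ (ZMod (2 * L + 1))).toAddEquiv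
    rw [dEnergy_eq_sum_shiftEnergy_comp_symm e, Fin.sum_univ_two] at hE
    rw [← sum_norm_pow_comp_addEquiv_symm e] at hS ⊢
    have := sum_norm_pow_four_le_zmod_prod hε hn _ hS (by simpa [e] using hE)
    linarith [sq_nonneg ε]
  · let e := ((Fin.consLinearEquiv ℤ fun _ => ZMod (2 * L + 1)).symm.trans
      (LinearEquiv.prodCongr (LinearEquiv.refl ℤ _) (LinearEquiv.finTwoArrow ℤ _))).toAddEquiv
    rw [dEnergy_eq_sum_shiftEnergy_comp_symm e, Fin.sum_univ_three] at hE
    rw [← sum_norm_pow_comp_addEquiv_symm e] at hS ⊢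
    exact sum_norm_pow_four_le_zmod_prod_prod hε hn _ hS
      (by simpa [e, Fin.consEquiv, Fin.tail] using hE)

/-- in dimension `d ≤ 3`, there is `C = C(d) > 0` such that for all
`ε ∈ (0,1)` and integers `L` with `Lε ≥ 1`, every `u ∈ ℓ²(ℤ^d/(2L+1)ℤ^d)` with
`‖u‖₂ = 1` and `⟨-Δ_L^P u, u⟩ ≤ ε²` satisfies `‖u‖₄ ≤ C ε^{d/4}`. -/
theorem l4_bound_low_dim (d : ℕ) (hd1 : 1 ≤ d) (hd3 : d ≤ 3) :
    ∃ C > (0:ℝ), ∀ ε : ℝ, 0 < ε → ε < 1 → ∀ L : ℕ, 1 ≤ ε * L →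
      ∀ u : DTorus d L → ℂ, (∑ β, ‖u β‖ ^ 2) = 1 → dEnergy d L u ≤ ε ^ 2 →
        (∑ β, ‖u β‖ ^ 4) ^ ((1:ℝ)/4) ≤ C * ε ^ ((d : ℝ) / 4) := by
  refine ⟨18 ^ ((1 : ℝ) / 4), by positivity, fun ε hε _ L hL u hS hE => ?_⟩
  have hn : ((2 * L + 1 : ℕ) : ℝ)⁻¹ ≤ ε := by
    rw [inv_le_iff_one_le_mul₀ (by positivity)]
    push_cast
    nlinarith
  calc (∑ β, ‖u β‖ ^ 4) ^ ((1 : ℝ) / 4) ≤ (18 * ε ^ d) ^ ((1 : ℝ) / 4) :=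
        Real.rpow_le_rpow (by positivity)
          (sum_norm_pow_four_le_of_dEnergy_le hd1 hd3 hε.le hn u hS hE) (by norm_num)
    _ = 18 ^ ((1 : ℝ) / 4) * ε ^ ((d : ℝ) / 4) := by
        rw [Real.mul_rpow (by norm_num) (by positivity), ← Real.rpow_natCast,
          ← Real.rpow_mul hε.le]
        ring_nf
end

section
/- For L ≥ 1 and ε ∈ (0,1), the function u on ℤ^d/(2L+1)ℤ^d defined by u(0) = ε and u(γ) = (2L+1)^{-d/2} for γ ≠ 0 satisfies: 1 ≤ ‖u‖₂ ≤ 1 + ε, ⟨-Δ_L^P u, u⟩ ≤ Cε² for some constant C depending only on d (for L large enough depending on ε), and ‖u‖₄ ≥ ε. In particular, the bound ‖u‖₄ ≤ Cg_d(ε) with g_d(ε) = ε for d ≥ 5 cannot be improved beyond a constant factor. -/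
set_option maxHeartbeats 1000000


open Finset

/-- the trial function `u(0) = ε`, `u(γ) = (2L+1)^{-d/2}` for `γ ≠ 0`
satisfies `1 ≤ ‖u‖₂ ≤ 1+ε`, `⟨-Δ_L^P u, u⟩ ≤ Cε²` and `‖u‖₄ ≥ ε`
(for `L` large enough depending on `ε`, with `C = C(d)`); hence the bound
`‖u‖₄ ≤ C g_d(ε)`, `g_d(ε) = ε` for `d ≥ 5`, is optimal up to a constant. -/
theorem trial_function_delta (d : ℕ) (hd : 1 ≤ d) :
    ∃ C > (0:ℝ), ∀ ε : ℝ, 0 < ε → ε < 1 → ∃ L₀ : ℕ, ∀ L : ℕ, L₀ ≤ L →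
      ∀ u : DTorus d L → ℂ,
        (∀ γ : DTorus d L,
          u γ = if γ = 0 then (ε : ℂ) else (((2 * L + 1 : ℝ) ^ (-(d : ℝ) / 2) : ℝ) : ℂ)) →
        1 ≤ Real.sqrt (∑ β, ‖u β‖ ^ 2) ∧
        Real.sqrt (∑ β, ‖u β‖ ^ 2) ≤ 1 + ε ∧
        dEnergy d L u ≤ C * ε ^ 2 ∧
        ε ≤ (∑ β, ‖u β‖ ^ 4) ^ ((1:ℝ)/4) := by
  have hdR : (1:ℝ) ≤ d := by exact_mod_cast hd
  refine ⟨2 * d, by linarith, ?_⟩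
  intro ε hε hε1
  refine ⟨max 1 ⌈ε⁻¹ ^ 2⌉₊, ?_⟩
  intro L hL u hu
  have hL1 : 1 ≤ L := le_trans (le_max_left _ _) hL
  haveI : Fact (1 < 2 * L + 1) := ⟨by omega⟩
  set c : ℝ := (2 * L + 1 : ℝ) ^ (-(d : ℝ) / 2) with hc
  have hLR : (0:ℝ) ≤ L := Nat.cast_nonneg L
  have hb0 : (0:ℝ) < 2 * L + 1 := by linarith
  have hc0 : 0 < c := Real.rpow_pos_of_pos hb0 _
  set N : ℕ := (2 * L + 1) ^ d with hN
  have hN1 : 1 ≤ N := Nat.one_le_pow _ _ (by omega)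
  have hcard : Fintype.card (DTorus d L) = N := by
    simp [DTorus, ZMod.card, hN]
  have hNr : (N : ℝ) = (2 * L + 1 : ℝ) ^ (d : ℕ) := by rw [hN]; push_cast; ring
  have hc2 : c ^ 2 = ((N : ℝ))⁻¹ := by
    rw [hc, ← Real.rpow_natCast ((2 * L + 1 : ℝ) ^ (-(d : ℝ) / 2)) 2,
      ← Real.rpow_mul hb0.le, hNr, ← Real.rpow_natCast (2 * L + 1 : ℝ) d,
      ← Real.rpow_neg hb0.le]
    congr 1
    push_cast
    ring
  have hNε : ε⁻¹ ^ 2 ≤ (N : ℝ) := by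
    have h1 : ε⁻¹ ^ 2 ≤ (⌈ε⁻¹ ^ 2⌉₊ : ℝ) := Nat.le_ceil _
    have h2 : (⌈ε⁻¹ ^ 2⌉₊ : ℕ) ≤ L := le_trans (le_max_right _ _) hL
    have h4 : 2 * L + 1 ≤ N := Nat.le_self_pow (by omega) _
    have : (⌈ε⁻¹ ^ 2⌉₊ : ℝ) ≤ (N : ℝ) := by
      exact_mod_cast le_trans (le_trans h2 (by omega)) h4
    linarith
  have hN0 : (0:ℝ) < N := lt_of_lt_of_le (by positivity) hNε
  have hinvN : ((N:ℝ))⁻¹ ≤ ε ^ 2 := by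
    have he2 : (0:ℝ) < ε ^ 2 := by positivity
    have h : (ε ^ 2)⁻¹ ≤ (N:ℝ) := by rw [← inv_pow]; exact hNε
    nlinarith [mul_inv_cancel₀ (ne_of_gt he2), mul_inv_cancel₀ (ne_of_gt hN0),
      mul_pos he2 hN0, inv_pos.mpr hN0]
  have hcε : c ≤ ε := by
    refine le_of_pow_le_pow_left₀ two_ne_zero hε.le ?_
    rw [hc2]; exact hinvN
  have hu0 : u 0 = (ε : ℂ) := by rw [hu 0, if_pos rfl]
  have huβ : ∀ β : DTorus d L, β ≠ 0 → u β = ((c:ℝ):ℂ) := by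
    intro β hβ; rw [hu β, if_neg hβ]
  -- L² norm
  have hsum2 : ∑ β : DTorus d L, ‖u β‖ ^ 2 = ε ^ 2 + ((N:ℝ) - 1) * c ^ 2 := by
    rw [← Finset.add_sum_erase _ _ (Finset.mem_univ (0 : DTorus d L))]
    have h0 : ‖u 0‖ ^ 2 = ε ^ 2 := by
      rw [hu0, Complex.norm_real, Real.norm_eq_abs, abs_of_pos hε]
    have hval : ∀ β ∈ (univ : Finset (DTorus d L)).erase 0, ‖u β‖ ^ 2 = c ^ 2 := by
      intro β hβ
      rw [huβ β (Finset.ne_of_mem_erase hβ), Complex.norm_real, Real.norm_eq_abs,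
        abs_of_pos hc0]
    have hrest : ∑ β ∈ (univ : Finset (DTorus d L)).erase 0, ‖u β‖ ^ 2
        = ((N:ℝ) - 1) * c ^ 2 := by
      rw [Finset.sum_congr rfl hval,
        Finset.sum_const, Finset.card_erase_of_mem (Finset.mem_univ _), Finset.card_univ,
        hcard, nsmul_eq_mul, Nat.cast_sub hN1]
      norm_num
    rw [h0, hrest]
  have hNc : (N:ℝ) * c ^ 2 = 1 := by rw [hc2, mul_inv_cancel₀ (ne_of_gt hN0)]
  have hc2ε : c ^ 2 ≤ ε ^ 2 := by rw [hc2]; exact hinvN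
  have hsumval : ∑ β : DTorus d L, ‖u β‖ ^ 2 = ε ^ 2 + 1 - c ^ 2 := by
    rw [hsum2]; nlinarith [hNc]
  refine ⟨?_, ?_, ?_, ?_⟩
  · have h1 : (1:ℝ) ≤ ∑ β : DTorus d L, ‖u β‖ ^ 2 := by rw [hsumval]; linarith
    calc (1:ℝ) = Real.sqrt 1 := Real.sqrt_one.symm
      _ ≤ _ := Real.sqrt_le_sqrt h1
  · have h1 : ∑ β : DTorus d L, ‖u β‖ ^ 2 ≤ (1 + ε) ^ 2 := by
      rw [hsumval]; nlinarith
    calc Real.sqrt (∑ β : DTorus d L, ‖u β‖ ^ 2) ≤ Real.sqrt ((1 + ε) ^ 2) :=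
        Real.sqrt_le_sqrt h1
      _ = 1 + ε := Real.sqrt_sq (by linarith)
  · -- energy
    have hej : ∀ j : Fin d, (fun i => if i = j then (1 : ZMod (2 * L + 1)) else 0)
        ≠ (0 : DTorus d L) := by
      intro j h
      have := congrFun h j
      simp at this
    set w : DTorus d L → ℂ := fun β => u β - ((c:ℝ):ℂ) with hwdef
    have hw0 : w 0 = ((ε - c : ℝ) : ℂ) := by
      simp only [hwdef, hu0]; push_cast; ring
    have hwβ : ∀ β : DTorus d L, β ≠ 0 → w β = 0 := by
      intro β hβ; simp [hwdef, huβ β hβ]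
    have hlap : ∀ β, dLap d L u β = dLap d L w β := by
      intro β; unfold dLap
      refine Finset.sum_congr rfl fun j _ => ?_
      simp only [hwdef]; ring
    have hshift : ∀ a : DTorus d L, ∑ β, w (β + a) = ∑ β, w β := by
      intro a
      simpa using Equiv.sum_comp (Equiv.addRight a) w
    have hsum0 : ∑ β, dLap d L w β = 0 := by
      unfold dLap
      rw [Finset.sum_comm]
      refine Finset.sum_eq_zero fun j _ => ?_
      have h1 := hshift (fun i => if i = j then 1 else 0)
      have h2 : ∑ β, w (β - (fun i => if i = j then 1 else 0 : DTorus d L)) = ∑ β, w β := by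
        simpa [sub_eq_add_neg] using hshift (-(fun i => if i = j then 1 else 0 : DTorus d L))
      rw [Finset.sum_sub_distrib, Finset.sum_sub_distrib, h1, h2, ← Finset.mul_sum]
      ring
    have hlap0 : dLap d L w 0 = 2 * d * ((ε - c : ℝ) : ℂ) := by
      unfold dLap
      have hterm : ∀ j : Fin d,
          2 * w 0 - w (0 + fun i => if i = j then 1 else 0)
            - w (0 - fun i => if i = j then 1 else 0) = 2 * ((ε - c : ℝ) : ℂ) := by
        intro j
        rw [hw0, hwβ _ (by rw [zero_add]; exact hej j),
          hwβ _ (by rw [zero_sub]; exact neg_ne_zero.mpr (hej j))]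
        ring
      rw [Finset.sum_congr rfl fun j _ => hterm j, Finset.sum_const, Finset.card_univ,
        Fintype.card_fin, nsmul_eq_mul]
      ring
    have hEsum : ∑ β : DTorus d L, (starRingEnd ℂ) (u β) * dLap d L u β
        = (((2 * d * (ε - c) ^ 2 : ℝ)) : ℂ) := by
      calc ∑ β : DTorus d L, (starRingEnd ℂ) (u β) * dLap d L u β
          = ∑ β : DTorus d L, ((starRingEnd ℂ) (w β) * dLap d L w β
              + ((c:ℝ):ℂ) * dLap d L w β) := by
            refine Finset.sum_congr rfl fun β _ => ?_
            rw [hlap β]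
            have hub : u β = w β + ((c:ℝ):ℂ) := by simp [hwdef]
            rw [hub, map_add, Complex.conj_ofReal]
            ring
        _ = (∑ β : DTorus d L, (starRingEnd ℂ) (w β) * dLap d L w β)
              + ((c:ℝ):ℂ) * ∑ β : DTorus d L, dLap d L w β := by
            rw [Finset.sum_add_distrib, Finset.mul_sum]
        _ = ∑ β : DTorus d L, (starRingEnd ℂ) (w β) * dLap d L w β := by
            rw [hsum0]; ring
        _ = (starRingEnd ℂ) (w 0) * dLap d L w 0 := by
            refine Fintype.sum_eq_single 0 fun β hβ => ?_
            rw [hwβ β hβ]; simp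
        _ = (((2 * d * (ε - c) ^ 2 : ℝ)) : ℂ) := by
            rw [hw0, hlap0, Complex.conj_ofReal]; push_cast; ring
    have hE : dEnergy d L u = 2 * d * (ε - c) ^ 2 := by
      unfold dEnergy
      rw [hEsum, Complex.ofReal_re]
    rw [hE]
    nlinarith [mul_nonneg (mul_nonneg (by linarith : (0:ℝ) ≤ 2 * d) hc0.le)
      (by linarith : (0:ℝ) ≤ 2 * ε - c)]
  · have h4 : ε ^ 4 ≤ ∑ β : DTorus d L, ‖u β‖ ^ 4 := by
      have := Finset.single_le_sum (f := fun β : DTorus d L => ‖u β‖ ^ 4)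
        (fun i _ => by positivity) (Finset.mem_univ 0)
      simpa [hu0, abs_of_pos hε] using this
    calc ε = (ε ^ (4:ℕ)) ^ ((1:ℝ)/4) := by
          rw [← Real.rpow_natCast ε 4, ← Real.rpow_mul hε.le,
            show ((4:ℕ):ℝ) * ((1:ℝ)/4) = 1 by norm_num, Real.rpow_one]
      _ ≤ _ := Real.rpow_le_rpow (by positivity) h4 (by norm_num)
end

section
/- Let A be a self-adjoint operator and suppose ψ₀, ψ₁ satisfy ‖(A - E_k)ψ_k‖ ≤ δ, |‖ψ_k‖ - 1| ≤ δ for k = 0,1, |⟨ψ₀, ψ₁⟩| ≤ δ, and |E₁ - E₀| ≤ δ, with δ sufficiently small (δ < 1/10 suffices). Then A has at least two eigenvalues (counted with multiplicity) in the interval [E₀ - Cδ, E₀ + Cδ] for some universal constant C. -/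
/-!
Expand both vectors in an orthonormal eigenbasis of `A`. Since
`‖(A - E)ψ‖² = ∑ᵢ (λᵢ - E)² |cᵢ|²`, all but a quarter of the mass of `ψ₀` and of `ψ₁` lies on
eigenvalues within `3δ` of `E₀`. If there were at most one such eigenvalue, both vectors would be
essentially multiples of a single eigenvector, so `|⟨ψ₀, ψ₁⟩|` could not be small.
-/

open Finset

section CauchySchwarz

variable {𝕜 F ι : Type*} [RCLike 𝕜] [NormedAddCommGroup F] [InnerProductSpace 𝕜 F]

theorem norm_sum_inner_le_sqrt_mul_sqrt (s : Finset ι) (u v : ι → F) :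
    ‖∑ i ∈ s, inner 𝕜 (u i) (v i)‖ ≤ √(∑ i ∈ s, ‖u i‖ ^ 2) * √(∑ i ∈ s, ‖v i‖ ^ 2) :=
  calc ‖∑ i ∈ s, inner 𝕜 (u i) (v i)‖
      ≤ ∑ i ∈ s, ‖u i‖ * ‖v i‖ :=
        (norm_sum_le _ _).trans (sum_le_sum fun _ _ => norm_inner_le_norm _ _)
    _ ≤ _ := Real.sum_mul_le_sqrt_mul_sqrt _ _ _

theorem norm_sum_inner_eq_sqrt_mul_sqrt_of_card_le_one {s : Finset ι} (hs : #s ≤ 1)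
    (u v : ι → 𝕜) :
    ‖∑ i ∈ s, inner 𝕜 (u i) (v i)‖ = √(∑ i ∈ s, ‖u i‖ ^ 2) * √(∑ i ∈ s, ‖v i‖ ^ 2) := by
  rcases s.eq_empty_or_nonempty with rfl | ⟨a, ha⟩
  · simp
  · obtain rfl : s = {a} :=
      eq_singleton_iff_unique_mem.mpr ⟨ha, fun j hj => card_le_one.mp hs j hj a ha⟩
    simp [mul_comm]

end CauchySchwarz

namespace EuclideanSpace

variable {𝕜 ι : Type*} [RCLike 𝕜] [Fintype ι] [DecidableEq ι]

theorem sqrt_mul_sqrt_le_norm_inner_add_of_card_le_one (u v : EuclideanSpace 𝕜 ι)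
    {s : Finset ι} (hs : #s ≤ 1) :
    √(∑ i ∈ s, ‖u i‖ ^ 2) * √(∑ i ∈ s, ‖v i‖ ^ 2) ≤
      ‖inner 𝕜 u v‖ + √(∑ i ∈ sᶜ, ‖u i‖ ^ 2) * √(∑ i ∈ sᶜ, ‖v i‖ ^ 2) := by
  have hsplit :
      ∑ i ∈ s, inner 𝕜 (u i) (v i) = inner 𝕜 u v - ∑ i ∈ sᶜ, inner 𝕜 (u i) (v i) := by
    rw [PiLp.inner_apply, ← sum_add_sum_compl s, add_sub_cancel_right]
  calc √(∑ i ∈ s, ‖u i‖ ^ 2) * √(∑ i ∈ s, ‖v i‖ ^ 2)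
      = ‖inner 𝕜 u v - ∑ i ∈ sᶜ, inner 𝕜 (u i) (v i)‖ := by
        rw [← hsplit, norm_sum_inner_eq_sqrt_mul_sqrt_of_card_le_one hs]
    _ ≤ ‖inner 𝕜 u v‖ + ‖∑ i ∈ sᶜ, inner 𝕜 (u i) (v i)‖ := norm_sub_le _ _
    _ ≤ _ := by gcongr; exact norm_sum_inner_le_sqrt_mul_sqrt _ _ _

end EuclideanSpace

namespace OrthonormalBasis

variable {𝕜 E ι : Type*} [RCLike 𝕜] [NormedAddCommGroup E] [InnerProductSpace 𝕜 E] [Fintype ι]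
  {T : E →ₗ[𝕜] E} (b : OrthonormalBasis ι 𝕜 E) {μ : ι → ℝ}

theorem repr_apply_sub_smul_of_isSymmetric (hT : T.IsSymmetric)
    (hb : ∀ i, T (b i) = (μ i : 𝕜) • b i) (x : E) (c : ℝ) (i : ι) :
    b.repr (T x - (c : 𝕜) • x) i = (μ i - c : ℝ) * b.repr x i := by
  rw [b.repr_apply_apply, b.repr_apply_apply, inner_sub_right, inner_smul_right, ← hT, hb,
    inner_smul_left, RCLike.conj_ofReal]
  push_cast
  ring

theorem norm_sub_smul_sq_eq_sum_of_isSymmetric (hT : T.IsSymmetric)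
    (hb : ∀ i, T (b i) = (μ i : 𝕜) • b i) (x : E) (c : ℝ) :
    ‖T x - (c : 𝕜) • x‖ ^ 2 = ∑ i, (μ i - c) ^ 2 * ‖b.repr x i‖ ^ 2 := by
  rw [← b.repr.norm_map, EuclideanSpace.norm_sq_eq]
  refine sum_congr rfl fun i _ => ?_
  rw [repr_apply_sub_smul_of_isSymmetric b hT hb, norm_mul, mul_pow, RCLike.norm_ofReal, sq_abs]

theorem sq_mul_sum_le_norm_sub_smul_sq_of_isSymmetric (hT : T.IsSymmetric)
    (hb : ∀ i, T (b i) = (μ i : 𝕜) • b i) (x : E) {c r : ℝ} (hr : 0 ≤ r) {s : Finset ι}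
    (hs : ∀ i ∈ s, r ≤ |μ i - c|) :
    r ^ 2 * ∑ i ∈ s, ‖b.repr x i‖ ^ 2 ≤ ‖T x - (c : 𝕜) • x‖ ^ 2 := by
  classical
  rw [norm_sub_smul_sq_eq_sum_of_isSymmetric b hT hb, mul_sum]
  calc ∑ i ∈ s, r ^ 2 * ‖b.repr x i‖ ^ 2
      ≤ ∑ i ∈ s, (μ i - c) ^ 2 * ‖b.repr x i‖ ^ 2 := by
        refine sum_le_sum fun i hi => mul_le_mul_of_nonneg_right ?_ (by positivity)
        exact sq_le_sq.mpr ((abs_of_nonneg hr).trans_le (hs i hi))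
    _ ≤ ∑ i, (μ i - c) ^ 2 * ‖b.repr x i‖ ^ 2 :=
        sum_le_sum_of_subset_of_nonneg (subset_univ s) fun _ _ _ => by positivity

end OrthonormalBasis

namespace LinearMap.IsSymmetric

variable {𝕜 V ι : Type*} [RCLike 𝕜] [NormedAddCommGroup V] [InnerProductSpace 𝕜 V] [Fintype ι]
  {T : V →ₗ[𝕜] V}

theorem exists_two_eigenvalues_near (hT : T.IsSymmetric) (b : OrthonormalBasis ι 𝕜 V)
    {μ : ι → ℝ} (hb : ∀ i, T (b i) = (μ i : 𝕜) • b i) {x y : V} {E₀ E₁ δ : ℝ}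
    (hδ : 0 < δ) (hδ' : δ < 1 / 10)
    (hx : ‖T x - (E₀ : 𝕜) • x‖ ≤ δ) (hy : ‖T y - (E₁ : 𝕜) • y‖ ≤ δ)
    (hx₁ : 1 - δ ≤ ‖x‖) (hy₁ : 1 - δ ≤ ‖y‖) (hxy : ‖inner 𝕜 x y‖ ≤ δ) (hE : |E₁ - E₀| ≤ δ) :
    ∃ i j, i ≠ j ∧ |μ i - E₀| ≤ 3 * δ ∧ |μ j - E₀| ≤ 3 * δ := by
  classical
  by_contra! hfar
  set s := univ.filter fun i => |μ i - E₀| ≤ 3 * δ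
  have hs : #s ≤ 1 := card_le_one.mpr fun i hi j hj => by
    by_contra hij
    exact (hfar i j hij (mem_filter.mp hi).2).not_ge (mem_filter.mp hj).2
  have htail : ∀ {z : V} {c : ℝ}, ‖T z - (c : 𝕜) • z‖ ≤ δ → |c - E₀| ≤ δ →
      √(∑ i ∈ sᶜ, ‖b.repr z i‖ ^ 2) ≤ 1 / 2 := by
    intro z c hz hc
    have hfar_c : ∀ i ∈ sᶜ, 2 * δ ≤ |μ i - c| := fun i hi => by
      have : 3 * δ < |μ i - E₀| := by simpa [s] using hi
      linarith [abs_sub_le (μ i) c E₀]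
    have hcheb := (b.sq_mul_sum_le_norm_sub_smul_sq_of_isSymmetric hT hb z (by positivity)
      hfar_c).trans (pow_le_pow_left₀ (norm_nonneg _) hz 2)
    rw [Real.sqrt_le_left (by norm_num)]
    nlinarith [pow_pos hδ 2]
  have hhead : ∀ {z : V}, 1 - δ ≤ ‖z‖ → √(∑ i ∈ sᶜ, ‖b.repr z i‖ ^ 2) ≤ 1 / 2 →
      7 / 10 ≤ √(∑ i ∈ s, ‖b.repr z i‖ ^ 2) := by
    intro z hz htz
    have hsplit : ∑ i ∈ s, ‖b.repr z i‖ ^ 2 + ∑ i ∈ sᶜ, ‖b.repr z i‖ ^ 2 = ‖z‖ ^ 2 := by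
      rw [sum_add_sum_compl, ← EuclideanSpace.norm_sq_eq, b.repr.norm_map]
    rw [Real.sqrt_le_left (by norm_num)] at htz
    rw [Real.le_sqrt (by norm_num) (by positivity)]
    nlinarith
  have key :=
    EuclideanSpace.sqrt_mul_sqrt_le_norm_inner_add_of_card_le_one (b.repr x) (b.repr y) hs
  rw [b.repr.inner_map_map] at key
  have hE₀ : |E₀ - E₀| ≤ δ := by rw [sub_self, abs_zero]; exact hδ.le
  have hheads := mul_le_mul (hhead hx₁ (htail hx hE₀)) (hhead hy₁ (htail hy hE))
    (by norm_num) (Real.sqrt_nonneg _)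
  have htails := mul_le_mul (htail hx hE₀) (htail hy hE) (Real.sqrt_nonneg _) (by norm_num)
  linarith

end LinearMap.IsSymmetric

theorem Matrix.IsHermitian.toEuclideanLin_eigenvectorBasis {𝕜 n : Type*} [RCLike 𝕜] [Fintype n]
    [DecidableEq n] {A : Matrix n n 𝕜} (hA : A.IsHermitian) (i : n) :
    A.toEuclideanLin (hA.eigenvectorBasis i) = (hA.eigenvalues i : 𝕜) • hA.eigenvectorBasis i := by
  rw [← RCLike.real_smul_eq_coe_smul]
  exact congrArg (WithLp.toLp 2) (hA.mulVec_eigenvectorBasis i)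

/-- two almost-orthogonal approximate eigenvectors of a Hermitian
matrix `A`, with close approximate eigenvalues `E₀, E₁` and error `δ < 1/10`,
force at least two true eigenvalues (with multiplicity) of `A` in
`[E₀ - Cδ, E₀ + Cδ]` for a universal constant `C`. -/
theorem two_approx_eigenvectors_two_eigenvalues :
    ∃ C > (0:ℝ), ∀ (n : ℕ) (A : Matrix (Fin n) (Fin n) ℂ) (hA : A.IsHermitian)
      (ψ₀ ψ₁ : Fin n → ℂ) (E₀ E₁ δ : ℝ),
      0 < δ → δ < 1/10 →
      Real.sqrt (∑ x, ‖A.mulVec ψ₀ x - (E₀ : ℂ) * ψ₀ x‖ ^ 2) ≤ δ →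
      Real.sqrt (∑ x, ‖A.mulVec ψ₁ x - (E₁ : ℂ) * ψ₁ x‖ ^ 2) ≤ δ →
      |Real.sqrt (∑ x, ‖ψ₀ x‖ ^ 2) - 1| ≤ δ →
      |Real.sqrt (∑ x, ‖ψ₁ x‖ ^ 2) - 1| ≤ δ →
      ‖∑ x, (starRingEnd ℂ) (ψ₀ x) * ψ₁ x‖ ≤ δ →
      |E₁ - E₀| ≤ δ →
      ∃ i j : Fin n, i ≠ j ∧
        |hA.eigenvalues i - E₀| ≤ C * δ ∧ |hA.eigenvalues j - E₀| ≤ C * δ := by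
  refine ⟨3, by norm_num, fun n A hA ψ₀ ψ₁ E₀ E₁ δ hδ hδ' hr₀ hr₁ hn₀ hn₁ hip hE => ?_⟩
  have hres : ∀ (ψ : Fin n → ℂ) (c : ℝ),
      ‖A.toEuclideanLin (WithLp.toLp 2 ψ) - (c : ℂ) • WithLp.toLp 2 ψ‖ =
        √(∑ x, ‖A.mulVec ψ x - (c : ℂ) * ψ x‖ ^ 2) :=
    fun _ _ => EuclideanSpace.norm_eq _
  have hnorm : ∀ ψ : Fin n → ℂ, ‖WithLp.toLp 2 ψ‖ = √(∑ x, ‖ψ x‖ ^ 2) :=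
    fun ψ => EuclideanSpace.norm_eq _
  have hinner :
      inner ℂ (WithLp.toLp 2 ψ₀) (WithLp.toLp 2 ψ₁) = ∑ x, (starRingEnd ℂ) (ψ₀ x) * ψ₁ x := by
    simp [EuclideanSpace.inner_toLp_toLp, dotProduct, mul_comm]
  exact (Matrix.isSymmetric_toEuclideanLin_iff.mpr hA).exists_two_eigenvalues_near
    hA.eigenvectorBasis hA.toEuclideanLin_eigenvectorBasis hδ hδ'
    (hres ψ₀ E₀ ▸ hr₀) (hres ψ₁ E₁ ▸ hr₁)
    (by rw [hnorm]; linarith [(abs_le.mp hn₀).1]) (by rw [hnorm]; linarith [(abs_le.mp hn₁).1])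
    (hinner ▸ hip) hE
end
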